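/- Let coh be a reflexive symmetric relation on a type M carrying the discrete topology, and let f, g : (ℕ → Bool) → M be continuous with f ≠ g. Then exactly one of the following holds: (∃ w, coh (f w) (g w) ∧ f w ≠ g w ∧ ∀ v < w, f v = g v) or (∃ w, ¬ coh (f w) (g w) ∧ ∀ v < w, f v = g v), where < is the lexicographic order. (Self-duality of the flag modality: (flag A)⊥ ≡ flag (A⊥).) -/
import Mathlib

open Classical

/-- Lexicographic (strict) order on the Cantor space `ℕ → Bool`. -/
def lexLt (w w' : ℕ → Bool) : Prop :=
  ∃ n : ℕ, (∀ k < n, w k = w' k) ∧ w n = false ∧ w' n = true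

/-- Trichotomy for the lexicographic order. -/
lemma lexLt_trichotomy (v w : ℕ → Bool) (h : v ≠ w) : lexLt v w ∨ lexLt w v := by
  have hex : ∃ n, v n ≠ w n := by
    by_contra hc
    push_neg at hc
    exact h (funext hc)
  let n := Nat.find hex
  have hn : v n ≠ w n := Nat.find_spec hex
  have hlt : ∀ k < n, v k = w k := fun k hk => by
    by_contra hc
    exact Nat.find_min hex hk hc
  cases hv : v n with
  | false =>
    left
    exact ⟨n, hlt, hv, by revert hn; cases w n <;> simp [hv]⟩
  | true =>
    right
    refine ⟨n, fun k hk => (hlt k hk).symm, ?_, hv⟩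
    revert hn; cases w n <;> simp [hv]

/-- The lexicographically least candidate element of `S`. -/
noncomputable def leastW (S : Set (ℕ → Bool)) : ℕ → Bool
  | n => if ∃ v ∈ S, (∀ k, (_ : k < n) → v k = leastW S k) ∧ v n = false then false else true
  termination_by n => n

lemma leastW_eq_false (S : Set (ℕ → Bool)) (n : ℕ) :
    leastW S n = false ↔ ∃ v ∈ S, (∀ k, k < n → v k = leastW S k) ∧ v n = false := by
  rw [leastW]
  split
  · simp_all
  · simp_all

lemma leastW_prefix_nonempty (S : Set (ℕ → Bool)) (hS : S.Nonempty) (n : ℕ) :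
    ∃ v ∈ S, ∀ k, k < n → v k = leastW S k := by
  induction n with
  | zero => obtain ⟨v, hv⟩ := hS; exact ⟨v, hv, by omega⟩
  | succ m ih =>
    obtain ⟨v, hv, hvk⟩ := ih
    by_cases h : ∃ u ∈ S, (∀ k, k < m → u k = leastW S k) ∧ u m = false
    · obtain ⟨u, hu, huk, hum⟩ := h
      refine ⟨u, hu, fun k hk => ?_⟩
      rcases Nat.lt_succ_iff_lt_or_eq.1 hk with hk' | rfl
      · exact huk k hk'
      · rw [hum, Eq.comm, leastW_eq_false]
        exact ⟨u, hu, huk, hum⟩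
    · refine ⟨v, hv, fun k hk => ?_⟩
      rcases Nat.lt_succ_iff_lt_or_eq.1 hk with hk' | rfl
      · exact hvk k hk'
      · have hvm : v k = true := by
          by_contra hc
          exact h ⟨v, hv, hvk, by revert hc; cases v k <;> simp⟩
        have hw : leastW S k ≠ false := fun hc => h ((leastW_eq_false S k).1 hc)
        rw [hvm]
        revert hw; cases leastW S k <;> simp
    
lemma leastW_mem (S : Set (ℕ → Bool)) (hS : S.Nonempty) (hcl : IsClosed S) :
    leastW S ∈ S := by
  set T : ℕ → Set (ℕ → Bool) :=
    fun n => S ∩ ⋂ k ∈ Finset.range n, {v : ℕ → Bool | v k = leastW S k} with hT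
  have hmemT : ∀ n v, v ∈ T n ↔ v ∈ S ∧ ∀ k, k < n → v k = leastW S k := by
    intro n v; simp [hT]
  have hsub : ∀ n, T (n + 1) ⊆ T n := by
    intro n v hv
    rw [hmemT] at hv ⊢
    exact ⟨hv.1, fun k hk => hv.2 k (by omega)⟩
  have hne : ∀ n, (T n).Nonempty := by
    intro n
    obtain ⟨v, hv, hvk⟩ := leastW_prefix_nonempty S hS n
    exact ⟨v, (hmemT n v).2 ⟨hv, hvk⟩⟩
  have hclT : ∀ n, IsClosed (T n) := by
    intro n
    exact hcl.inter (isClosed_biInter fun k _ =>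
      isClosed_eq (continuous_apply k) continuous_const)
  have hcomp : IsCompact (T 0) := (hclT 0).isCompact
  obtain ⟨v, hv⟩ :=
    IsCompact.nonempty_iInter_of_sequence_nonempty_isCompact_isClosed T hsub hne hcomp hclT
  have hvS : v ∈ S := ((hmemT 0 v).1 (Set.mem_iInter.1 hv 0)).1
  have : v = leastW S := by
    funext k
    exact ((hmemT (k + 1) v).1 (Set.mem_iInter.1 hv (k + 1))).2 k (by omega)
  rwa [this] at hvS

lemma leastW_min (S : Set (ℕ → Bool)) (v : ℕ → Bool) (hlt : lexLt v (leastW S)) : v ∉ S := by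
  intro hv
  obtain ⟨n, hk, hvn, hwn⟩ := hlt
  have : leastW S n = false := (leastW_eq_false S n).2 ⟨v, hv, hk, hvn⟩
  rw [this] at hwn; exact Bool.false_ne_true hwn

/-- Self-duality of the flag modality: two distinct continuous functions are strictly
coherent in `flag A` or strictly coherent in `flag (A⊥)`, but not both. -/
theorem flag_self_dual {M : Type*} [TopologicalSpace M] [DiscreteTopology M]
    (coh : M → M → Prop) (hrefl : ∀ x, coh x x) (hsymm : ∀ x y, coh x y → coh y x)
    (f g : (ℕ → Bool) → M) (hf : Continuous f) (hg : Continuous g) (hne : f ≠ g) :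
    Xor'
      (∃ w, (coh (f w) (g w) ∧ f w ≠ g w) ∧ ∀ v, lexLt v w → f v = g v)
      (∃ w, ¬ coh (f w) (g w) ∧ ∀ v, lexLt v w → f v = g v) := by
  set S : Set (ℕ → Bool) := {w | f w ≠ g w} with hS
  have hSne : S.Nonempty := by
    obtain ⟨w, hw⟩ := Function.ne_iff.1 hne
    exact ⟨w, hw⟩
  have hScl : IsClosed S := by
    have hop : IsOpen {w | f w = g w} := by
      have hc : Continuous fun w => (f w, g w) := hf.prodMk hg
      have heq : {w | f w = g w} = (fun w => (f w, g w)) ⁻¹' {p : M × M | p.1 = p.2} := rfl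
      rw [heq]
      exact (isOpen_discrete _).preimage hc
    have heq : S = {w | f w = g w}ᶜ := by ext w; simp [hS]
    rw [heq]
    exact hop.isClosed_compl
  set w₀ := leastW S with hw₀
  have hw₀S : w₀ ∈ S := leastW_mem S hSne hScl
  have hmin : ∀ v, lexLt v w₀ → f v = g v := by
    intro v hv
    by_contra hc
    exact leastW_min S v hv hc
  have excl : ¬ ((∃ w, (coh (f w) (g w) ∧ f w ≠ g w) ∧ ∀ v, lexLt v w → f v = g v) ∧
      (∃ w, ¬ coh (f w) (g w) ∧ ∀ v, lexLt v w → f v = g v)) := by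
    rintro ⟨⟨w, ⟨hcoh, hnew⟩, hminw⟩, ⟨w', hncoh, hminw'⟩⟩
    by_cases hww : w = w'
    · subst hww; exact hncoh hcoh
    · rcases lexLt_trichotomy w w' hww with h | h
      · exact hnew (hminw' w h)
      · have := hminw w' h
        exact hncoh (this ▸ hrefl (g w'))
  by_cases hc : coh (f w₀) (g w₀)
  · exact Or.inl ⟨⟨w₀, ⟨hc, hw₀S⟩, hmin⟩, fun hb => excl ⟨⟨w₀, ⟨hc, hw₀S⟩, hmin⟩, hb⟩⟩
  · exact Or.inr ⟨⟨w₀, hc, hmin⟩, fun ha => excl ⟨ha, ⟨w₀, hc, hmin⟩⟩⟩
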